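/- arXiv:2303.11990 — 2 statements merged into one kernel-verified Lean document; each statement's English description precedes it below -/
import Mathlib

section
/- Let R be a commutative ring equipped with a ℤ-grading 𝒜 (a direct sum decomposition of R by additive subgroups making R a graded ring) such that 𝒜 i = 0 for all i < 0. Let M and N be R-modules equipped with ℤ-gradings ℳ and 𝒩 compatible with the grading of R (i.e. 𝒜 i • ℳ j ⊆ ℳ (i+j) and 𝒜 i • 𝒩 j ⊆ 𝒩 (i+j)), and let φ : M → N be an R-linear map that is grade-preserving (φ maps ℳ d into 𝒩 d for all d ∈ ℤ) and restricts to a bijection ℳ d → 𝒩 d for every d ≥ 0. Then for every homogeneous element f ∈ 𝒜 1 of weight 1, the induced map of localized modules M_f → N_f (localization of M and N at the multiplicative set of powers of f) is bijective. -/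
/-- discrete case of Lemma `Lem:Loc`.
Let `R` be a commutative ring with a nonnegatively supported `ℤ`-grading `𝒜`, let `M`, `N` be
`R`-modules with compatible `ℤ`-gradings `ℳ`, `𝒩`, and let `φ : M →ₗ[R] N` be grade-preserving
and bijective in each nonnegative degree.  Then for every homogeneous `f ∈ 𝒜 1`, the induced
map on localizations at the powers of `f` is bijective. -/
theorem rees_localization_bijective_of_nonneg_iso
    {R : Type*} [CommRing R] (𝒜 : ℤ → AddSubgroup R) [GradedRing 𝒜]
    (hconn : ∀ i : ℤ, i < 0 → 𝒜 i = ⊥)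
    {M N : Type*} [AddCommGroup M] [AddCommGroup N] [Module R M] [Module R N]
    (ℳ : ℤ → AddSubgroup M) (𝒩 : ℤ → AddSubgroup N)
    [DirectSum.Decomposition ℳ] [DirectSum.Decomposition 𝒩]
    (hℳ : ∀ (i j : ℤ), ∀ r ∈ 𝒜 i, ∀ m ∈ ℳ j, r • m ∈ ℳ (i + j))
    (h𝒩 : ∀ (i j : ℤ), ∀ r ∈ 𝒜 i, ∀ n ∈ 𝒩 j, r • n ∈ 𝒩 (i + j))
    (φ : M →ₗ[R] N)
    (hgrade : ∀ d : ℤ, ∀ m ∈ ℳ d, φ m ∈ 𝒩 d)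
    (hbij : ∀ d : ℤ, 0 ≤ d → Set.BijOn φ (ℳ d : Set M) (𝒩 d : Set N))
    (f : R) (hf : f ∈ 𝒜 1) :
    Function.Bijective
      (IsLocalizedModule.map (Submonoid.powers f)
        (LocalizedModule.mkLinearMap (Submonoid.powers f) M)
        (LocalizedModule.mkLinearMap (Submonoid.powers f) N) φ) := by
  classical
  have fk : ∀ k : ℕ, f ^ k ∈ 𝒜 (k : ℤ) := by
    intro k
    simpa using SetLike.pow_mem_graded k hf
  -- φ commutes with taking homogeneous components
  have key : ∀ (m : M) (j : ℤ),
      (DirectSum.decompose 𝒩 (φ m) j : N) = φ (DirectSum.decompose ℳ m j : M) := by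
    intro m j
    induction m using DirectSum.Decomposition.inductionOn ℳ with
    | zero => simp
    | homogeneous m =>
      rename_i i
      by_cases hij : i = j
      · subst hij
        rw [DirectSum.decompose_of_mem_same ℳ m.2,
          DirectSum.decompose_of_mem_same 𝒩 (hgrade i m m.2)]
      · rw [DirectSum.decompose_of_mem_ne ℳ m.2 hij,
          DirectSum.decompose_of_mem_ne 𝒩 (hgrade i m m.2) hij, map_zero]
    | add m m' hm hm' =>
      rw [map_add, DirectSum.decompose_add, DirectSum.decompose_add, DirectSum.add_apply,
        DirectSum.add_apply, AddSubgroup.coe_add, AddSubgroup.coe_add, hm, hm', map_add]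
  -- kernel is annihilated by a power of f
  have kerA : ∀ m : M, φ m = 0 → ∃ k : ℕ, f ^ k • m = 0 := by
    intro m hm
    set s := (DirectSum.decompose ℳ m).support with hs
    set k := s.sup fun j => (-j).toNat with hk
    refine ⟨k, ?_⟩
    conv_lhs => rw [← DirectSum.sum_support_decompose ℳ m, Finset.smul_sum]
    apply Finset.sum_eq_zero
    intro j hj
    have h1 : (-j).toNat ≤ k := Finset.le_sup (f := fun j : ℤ => (-j).toNat) hj
    have hkj : (0 : ℤ) ≤ (k : ℤ) + j := by omega
    have hmem : f ^ k • (DirectSum.decompose ℳ m j : M) ∈ ℳ ((k : ℤ) + j) :=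
      hℳ k j _ (fk k) _ (SetLike.coe_mem _)
    have hφ0 : φ (DirectSum.decompose ℳ m j : M) = 0 := by
      rw [← key, hm]; simp
    refine (hbij _ hkj).injOn hmem (zero_mem (ℳ ((k : ℤ) + j))) ?_
    rw [map_smul, hφ0, smul_zero, map_zero]
  -- a power of f times any element of N lifts through φ
  have surB : ∀ n : N, ∃ (k : ℕ) (m : M), φ m = f ^ k • n := by
    intro n
    set s := (DirectSum.decompose 𝒩 n).support with hs
    set k := s.sup fun j => (-j).toNat with hk
    have hex : ∀ j ∈ s, ∃ m : M, φ m = f ^ k • (DirectSum.decompose 𝒩 n j : N) := by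
      intro j hj
      have h1 : (-j).toNat ≤ k := Finset.le_sup (f := fun j : ℤ => (-j).toNat) hj
      have hkj : (0 : ℤ) ≤ (k : ℤ) + j := by omega
      have hmem : f ^ k • (DirectSum.decompose 𝒩 n j : N) ∈ 𝒩 ((k : ℤ) + j) :=
        h𝒩 k j _ (fk k) _ (SetLike.coe_mem _)
      obtain ⟨m, _, hm2⟩ := (hbij _ hkj).surjOn hmem
      exact ⟨m, hm2⟩
    choose g hg using hex
    refine ⟨k, ∑ j ∈ s.attach, g j j.2, ?_⟩
    rw [map_sum]
    conv_rhs => rw [← DirectSum.sum_support_decompose 𝒩 n, Finset.smul_sum, ← hs]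
    rw [← Finset.sum_attach s fun j => f ^ k • (DirectSum.decompose 𝒩 n j : N)]
    exact Finset.sum_congr rfl fun j _ => hg j j.2
  constructor
  · rw [injective_iff_map_eq_zero]
    intro x hx
    induction x using LocalizedModule.induction_on with
    | h m t =>
      rw [IsLocalizedModule.mk_eq_mk', IsLocalizedModule.map_mk',
        IsLocalizedModule.mk'_eq_zero'] at hx
      obtain ⟨c, hc⟩ := hx
      obtain ⟨a, ha⟩ := c.2
      rw [Submonoid.smul_def] at hc
      have hφ : φ (f ^ a • m) = 0 := by
        rw [map_smul, show f ^ a = (c : R) from ha]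
        exact hc
      obtain ⟨k, hk⟩ := kerA _ hφ
      rw [IsLocalizedModule.mk_eq_mk', IsLocalizedModule.mk'_eq_zero']
      refine ⟨⟨f ^ (k + a), ⟨k + a, rfl⟩⟩, ?_⟩
      show f ^ (k + a) • m = 0
      rw [pow_add, mul_smul]
      exact hk
  · intro y
    induction y using LocalizedModule.induction_on with
    | h n t =>
      obtain ⟨k, m, hm⟩ := surB n
      refine ⟨LocalizedModule.mk m ((⟨f ^ k, ⟨k, rfl⟩⟩ : Submonoid.powers f) * t), ?_⟩
      rw [IsLocalizedModule.mk_eq_mk', IsLocalizedModule.map_mk', ← IsLocalizedModule.mk_eq_mk', hm]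
      exact LocalizedModule.mk_cancel_common_left (⟨f ^ k, ⟨k, rfl⟩⟩ : Submonoid.powers f) t n
end

section
/- Let V be a Banach space over ℝ. Then there exists a continuous ℝ-linear map T from the ℓ¹-space lp (fun _ : {v : V // v ≠ 0} => ℝ) 1 to V such that ‖T a‖ ≤ ‖a‖ for every a, and such that for every w ∈ V there exists a with T a = w and ‖a‖ = ‖w‖. In particular, T is a surjective, norm-nonincreasing continuous linear map exhibiting V as a strict (metric) quotient of an ℓ¹-space. -/
open scoped ENNReal

section Aux

variable (V : Type*) [NormedAddCommGroup V] [NormedSpace ℝ V] [CompleteSpace V]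

private noncomputable def dir (v : {v : V // v ≠ 0}) : V := ‖(v : V)‖⁻¹ • (v : V)

omit [CompleteSpace V] in
private theorem norm_dir (v : {v : V // v ≠ 0}) : ‖dir V v‖ = 1 := by
  have h : ‖(v : V)‖ ≠ 0 := norm_ne_zero_iff.mpr v.2
  simp [dir, norm_smul, abs_of_nonneg (inv_nonneg.mpr (norm_nonneg _)), inv_mul_cancel₀ h]

omit [CompleteSpace V] in
private theorem summable_norm_aux (a : lp (fun _ : {v : V // v ≠ 0} => ℝ) 1) :
    Summable (fun v => ‖a v • dir V v‖) := by
  have h : Summable (fun v => ‖a v‖ ^ (1 : ℝ≥0∞).toReal) :=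
    (lp.memℓp a).summable (by norm_num)
  simpa [norm_smul, norm_dir] using h

private theorem summable_aux (a : lp (fun _ : {v : V // v ≠ 0} => ℝ) 1) :
    Summable (fun v => a v • dir V v) :=
  Summable.of_norm (summable_norm_aux V a)

end Aux

/-- enough projectives in Banach modules, Archimedean Banach-space case.
Every real Banach space `V` is a strict metric quotient of the `ℓ¹`-space on the index set of
its nonzero vectors: there is a norm-nonincreasing continuous linear map
`T : ℓ¹({v : V // v ≠ 0}, ℝ) → V` such that every `w ∈ V` has a preimage of the same norm. -/
theorem banach_strict_quotient_of_lp_one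
    (V : Type*) [NormedAddCommGroup V] [NormedSpace ℝ V] [CompleteSpace V] :
    ∃ T : lp (fun _ : {v : V // v ≠ 0} => ℝ) 1 →L[ℝ] V,
      (∀ a, ‖T a‖ ≤ ‖a‖) ∧ ∀ w : V, ∃ a, T a = w ∧ ‖a‖ = ‖w‖ := by
  have hnorm : ∀ a : lp (fun _ : {v : V // v ≠ 0} => ℝ) 1,
      ‖∑' v, a v • dir V v‖ ≤ ‖a‖ := by
    intro a
    calc ‖∑' v, a v • dir V v‖ ≤ ∑' v, ‖a v • dir V v‖ :=
          norm_tsum_le_tsum_norm (summable_norm_aux V a)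
      _ = ∑' v, ‖a v‖ := by simp [norm_smul, norm_dir]
      _ = ‖a‖ := by
          rw [lp.norm_eq_tsum_rpow (by norm_num) a]
          simp
  let Tlin : lp (fun _ : {v : V // v ≠ 0} => ℝ) 1 →ₗ[ℝ] V :=
    { toFun := fun a => ∑' v, a v • dir V v
      map_add' := fun a b => by
        simp only [lp.coeFn_add, Pi.add_apply, add_smul]
        exact Summable.tsum_add (summable_aux V a) (summable_aux V b)
      map_smul' := fun c a => by
        simp only [lp.coeFn_smul, Pi.smul_apply, smul_eq_mul, mul_smul, RingHom.id_apply]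
        exact Summable.tsum_const_smul c (summable_aux V a) }
  refine ⟨Tlin.mkContinuous 1 (fun a => by simpa [Tlin] using hnorm a), fun a => by
    simpa [Tlin] using hnorm a, fun w => ?_⟩
  classical
  rcases eq_or_ne w 0 with rfl | hw
  · exact ⟨0, by simp [Tlin], by simp⟩
  · set a := lp.single (E := fun _ : {v : V // v ≠ 0} => ℝ) 1 ⟨w, hw⟩ ‖w‖ with ha
    refine ⟨a, ?_, ?_⟩
    · show ∑' v, a v • dir V v = w
      rw [ha, tsum_eq_single (⟨w, hw⟩ : {v : V // v ≠ 0})]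
      · rw [lp.single_apply_self]
        simp only [dir]
        rw [smul_smul, mul_inv_cancel₀ (norm_ne_zero_iff.mpr hw), one_smul]
      · intro v hv
        rw [lp.single_apply_ne _ _ _ hv, zero_smul]
    · have := lp.norm_single (p := 1) (E := fun _ : {v : V // v ≠ 0} => ℝ)
        (by norm_num) ⟨w, hw⟩ ‖w‖
      simpa [ha] using this
end
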